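/- arXiv:2512.19868 — 2 statements merged into one kernel-verified Lean document; each statement's English description precedes it below -/
import Mathlib

section
/- The cokernel of the integer matrix [[1,1,1,0],[2,0,0,1],[0,-2,0,1],[0,0,-b,c]] (viewed as a map Z^4 -> Z^4) is isomorphic to Z/2 × Z/(2c) if b is even, and to Z/(4c) if b is odd (assuming gcd(b,c)=1 and c ≥ 1). -/
/-- The mod-`n` reduction of an integer linear functional on `ℤ⁴`, as a `ℤ`-linear map. -/
def auxPhi (a0 a1 a2 a3 : ℤ) (n : ℕ) : (Fin 4 → ℤ) →ₗ[ℤ] ZMod n where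
  toFun v := ((a0 * v 0 + a1 * v 1 + a2 * v 2 + a3 * v 3 : ℤ) : ZMod n)
  map_add' x y := by
    simp only [Pi.add_apply]
    push_cast
    ring
  map_smul' r x := by
    simp only [Pi.smul_apply, smul_eq_mul, RingHom.id_apply]
    rw [zsmul_eq_mul]
    push_cast
    ring

theorem auxPhi_apply (a0 a1 a2 a3 : ℤ) (n : ℕ) (v : Fin 4 → ℤ) :
    auxPhi a0 a1 a2 a3 n v = ((a0 * v 0 + a1 * v 1 + a2 * v 2 + a3 * v 3 : ℤ) : ZMod n) := rfl

/-- The cokernel of the integer matrix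
`[[1,1,1,0],[2,0,0,1],[0,-2,0,1],[0,0,-b,c]]` (as a map `ℤ⁴ → ℤ⁴`) is
`ℤ/2 × ℤ/(2c)` if `b` is even and `ℤ/(4c)` if `b` is odd,
assuming `gcd(b,c) = 1` and `c ≥ 1`. -/
theorem stmt0 (b : ℤ) (c : ℕ) (hc : 1 ≤ c) (hbc : IsCoprime b (c : ℤ)) :
    (Even b →
      Nonempty (((Fin 4 → ℤ) ⧸ LinearMap.range
        (Matrix.mulVecLin
          (!![1, 1, 1, 0; 2, 0, 0, 1; 0, -2, 0, 1; 0, 0, -b, (c : ℤ)]))) ≃+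
        (ZMod 2 × ZMod (2 * c)))) ∧
    (Odd b →
      Nonempty (((Fin 4 → ℤ) ⧸ LinearMap.range
        (Matrix.mulVecLin
          (!![1, 1, 1, 0; 2, 0, 0, 1; 0, -2, 0, 1; 0, 0, -b, (c : ℤ)]))) ≃+
        ZMod (4 * c))) := by
  set M := !![1, 1, 1, 0; 2, 0, 0, 1; 0, -2, 0, 1; 0, 0, -b, (c : ℤ)] with hM
  have hmv : ∀ w : Fin 4 → ℤ, M.mulVec w =
      ![w 0 + w 1 + w 2, 2 * w 0 + w 3, -2 * w 1 + w 3, -b * w 2 + c * w 3] := by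
    intro w
    funext i
    fin_cases i <;>
      simp [hM, Matrix.mulVec, dotProduct, Fin.sum_univ_four] <;> ring
  constructor
  · rintro ⟨b', rfl⟩
    -- even case: b = b' + b'
    set φ : (Fin 4 → ℤ) →ₗ[ℤ] ZMod 2 × ZMod (2 * c) :=
      (auxPhi 0 1 1 0 2).prod (auxPhi (2 * b') (-b') (b' - c) 1 (2 * c)) with hφ
    have hsurj : Function.Surjective φ := by
      rintro ⟨x, y⟩
      obtain ⟨x', rfl⟩ := ZMod.intCast_surjective x
      obtain ⟨y', rfl⟩ := ZMod.intCast_surjective y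
      refine ⟨![0, x', 0, y' + b' * x'], ?_⟩
      simp only [hφ, LinearMap.prod_apply, Function.prod, auxPhi_apply, Prod.mk.injEq]
      constructor <;> simp <;> push_cast <;> ring_nf
    have hker : LinearMap.range (Matrix.mulVecLin M) = LinearMap.ker φ := by
      ext v
      simp only [LinearMap.mem_range, LinearMap.mem_ker, Matrix.mulVecLin_apply, hφ,
        LinearMap.prod_apply, Function.prod, Prod.mk_eq_zero, auxPhi_apply,
        ZMod.intCast_zmod_eq_zero_iff_dvd]
      constructor
      · rintro ⟨w, rfl⟩
        rw [hmv w]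
        constructor
        · exact ⟨w 0 - w 1 + w 3, by simp; ring⟩
        · exact ⟨w 1, by simp; push_cast; ring⟩
      · rintro ⟨⟨m', hm'⟩, ⟨k, hk⟩⟩
        -- v 1 + v 2 = 2 m',  E = 2c k
        push_cast at hm' hk
        have h3 : -(b' + b') * (v 0 - m' + v 2) + (c : ℤ) * (v 2 + 2 * k) = v 3 := by
          linear_combination -hk - b' * hm'
        refine ⟨![m' - v 2 - k, k, v 0 - m' + v 2, v 2 + 2 * k], ?_⟩
        rw [hmv]
        funext i
        fin_cases i <;> simp <;> linarith [h3]
    exact ⟨((Submodule.quotEquivOfEq _ _ hker).trans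
      (LinearMap.quotKerEquivOfSurjective φ hsurj)).toAddEquiv⟩
  · rintro ⟨r, hr⟩
    -- odd case: b = 2r + 1
    have hodd : b = 2 * r + 1 := hr
    set φ : (Fin 4 → ℤ) →ₗ[ℤ] ZMod (4 * c) :=
      auxPhi (2 * b) (-b) (b - 2 * c) 2 (4 * c) with hφ
    have hsurj : Function.Surjective φ := by
      intro y
      obtain ⟨y', rfl⟩ := ZMod.intCast_surjective y
      refine ⟨![0, y', 0, (r + 1) * y'], ?_⟩
      simp only [hφ, auxPhi_apply]
      congr 1
      simp [Matrix.cons_val_zero, Matrix.cons_val_one]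
      subst hr; ring
    have hker : LinearMap.range (Matrix.mulVecLin M) = LinearMap.ker φ := by
      ext v
      simp only [LinearMap.mem_range, LinearMap.mem_ker, Matrix.mulVecLin_apply, hφ,
        auxPhi_apply, ZMod.intCast_zmod_eq_zero_iff_dvd]
      constructor
      · rintro ⟨w, rfl⟩
        rw [hmv w]
        exact ⟨w 1, by simp; push_cast; ring⟩
      · rintro ⟨k, hk⟩
        -- 2b v0 - b v1 + (b-2c) v2 + 2 v3 = 4c k
        -- parity: b(2v0 - v1 + v2) even with b odd gives v1 + v2 even
        have hpar : (2 : ℤ) ∣ (v 1 + v 2) := by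
          have h2 : (2 : ℤ) ∣ b * (v 1 - v 2) := by
            refine ⟨b * v 0 + (-c) * v 2 + v 3 - 2 * c * k, ?_⟩
            push_cast at hk ⊢; linarith
          have hb : ¬ (2 : ℤ) ∣ b := by
            rw [hodd]; omega
          have := (Int.Prime.dvd_mul' Nat.prime_two h2).resolve_left hb
          omega
        obtain ⟨m', hm'⟩ := hpar
        push_cast at hk
        have h3 : -(b * (v 0 - m' + v 2)) + (c : ℤ) * (v 2 + 2 * k) = v 3 := by
          have h2 : 2 * (-(b * (v 0 - m' + v 2)) + (c : ℤ) * (v 2 + 2 * k)) = 2 * v 3 := by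
            linear_combination -hk - b * hm'
          linarith
        refine ⟨![m' - v 2 - k, k, v 0 - m' + v 2, v 2 + 2 * k], ?_⟩
        rw [hmv]
        funext i
        fin_cases i <;> simp <;> linarith [h3]
    exact ⟨((Submodule.quotEquivOfEq _ _ hker).trans
      (LinearMap.quotKerEquivOfSurjective φ hsurj)).toAddEquiv⟩
end

section
/- Let a, b, a', b' be odd integers with a - b = a' - b'. If the multisets {(-b-2)/4, (-b-2)/4, (-b+2)/4, (-b+2)/4, (a-2)/4, (a-2)/4, (a+2)/4, (a+2)/4} and {(-b'-2)/4, (-b'-2)/4, (-b'+2)/4, (-b'+2)/4, (a'-2)/4, (a'-2)/4, (a'+2)/4, (a'+2)/4} of rational numbers are equal, then (a,b) = (a',b') or (a,b) = (-b',-a'). -/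
/-- For odd `a, b, a', b'` with `a - b = a' - b'`, equality of the multisets of
eight d-invariants forces `(a,b) = (a',b')` or `(a,b) = (-b',-a')`. -/
theorem stmt7 (a b a' b' : ℤ) (ha : Odd a) (hb : Odd b) (ha' : Odd a')
    (hb' : Odd b') (hdiff : a - b = a' - b')
    (hms : ({(-(b : ℚ) - 2) / 4, (-(b : ℚ) - 2) / 4, (-(b : ℚ) + 2) / 4,
        (-(b : ℚ) + 2) / 4, ((a : ℚ) - 2) / 4, ((a : ℚ) - 2) / 4,
        ((a : ℚ) + 2) / 4, ((a : ℚ) + 2) / 4} : Multiset ℚ) =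
      ({(-(b' : ℚ) - 2) / 4, (-(b' : ℚ) - 2) / 4, (-(b' : ℚ) + 2) / 4,
        (-(b' : ℚ) + 2) / 4, ((a' : ℚ) - 2) / 4, ((a' : ℚ) - 2) / 4,
        ((a' : ℚ) + 2) / 4, ((a' : ℚ) + 2) / 4} : Multiset ℚ)) :
    (a = a' ∧ b = b') ∨ (a = -b' ∧ b = -a') := by
  have hsum := congrArg (fun s : Multiset ℚ => (s.map (fun x => x ^ 2)).sum) hms
  simp only [Multiset.insert_eq_cons, Multiset.map_cons, Multiset.map_singleton,
    Multiset.sum_cons, Multiset.sum_singleton] at hsum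
  have hsqQ : (a : ℚ) ^ 2 + (b : ℚ) ^ 2 = (a' : ℚ) ^ 2 + (b' : ℚ) ^ 2 := by
    field_simp at hsum
    ring_nf at hsum ⊢
    linarith
  have hsq : a ^ 2 + b ^ 2 = a' ^ 2 + b' ^ 2 := by exact_mod_cast hsqQ
  have hab2 : 2 * (a * b) = 2 * (a' * b') := by
    linear_combination hsq - (a - b + a' - b') * hdiff
  have hab : a * b = a' * b' := by linarith
  have h0 : (a - a') * (a + b') = 0 := by linear_combination a * hdiff + hab
  rcases mul_eq_zero.mp h0 with h | h
  · left; constructor <;> omega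
  · right; constructor <;> omega
end
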